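/- Guided reverse factorization (exact discrete core of Theorem 1): in the discrete diffusion-with-label model, for every i with 1 ≤ i ≤ T, every a, b ∈ S, h ∈ H, c ∈ C such that the marginals P(x i = b, c, h) > 0, P(x (i−1) = a, x i = b, h) > 0, P(x (i−1) = a, h) > 0 and the conditional P(c ∣ x i = b, h) > 0, the label-guided reverse conditional factorizes as P(x (i−1) = a ∣ x i = b, c, h) = P(x (i−1) = a ∣ x i = b, h) · P(c ∣ x (i−1) = a, h) / P(c ∣ x i = b, h). -/

import Mathlib

open Finset

/-!
The chain is Markov and every row of `kappa` sums to one, so summing out the states after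
step `i` shows `P(x (i-1) = a, x i = b, c, h) = kappa a b * P(x (i-1) = a, c, h)` for every
label `c`. Substituting this into all numerators, the factor `kappa a b` and the marginal
`P(x (i-1) = a, h)` cancel, and both sides reduce to
`kappa a b * P(x (i-1) = a, c, h) / P(x i = b, c, h)`.
-/

/-- Joint probability mass function of the discrete diffusion-with-label model. -/
noncomputable def P {H S C : Type*} [Fintype S] (T : ℕ)
    (pi : H → ℝ) (rho : H → S → ℝ) (lab : H → S → C → ℝ) (kappa : S → S → ℝ)
    (h : H) (x : Fin (T + 1) → S) (c : C) : ℝ :=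
  pi h * rho h (x 0) * lab h (x 0) c * ∏ i : Fin T, kappa (x i.castSucc) (x i.succ)

section DiffusionMarginals

variable {H S C : Type*} [Fintype S] {pi : H → ℝ} {rho : H → S → ℝ} {lab : H → S → C → ℝ}
  {kappa : S → S → ℝ} {h : H} {c : C}

theorem P_snoc (n : ℕ) (y : Fin (n + 1) → S) (s : S) :
    P (n + 1) pi rho lab kappa h (Fin.snoc y s) c
      = P n pi rho lab kappa h y c * kappa (y (Fin.last n)) s := by
  unfold P
  rw [Fin.prod_univ_castSucc]
  simp only [Fin.succ_castSucc, Fin.snoc_castSucc, Fin.succ_last, Fin.snoc_last,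
    ← Fin.castSucc_zero]
  ring

theorem sum_mul_P_succ (n : ℕ) (f : (Fin (n + 2) → S) → ℝ) :
    ∑ x, f x * P (n + 1) pi rho lab kappa h x c
      = ∑ y, ∑ s, f (Fin.snoc y s) * (P n pi rho lab kappa h y c * kappa (y (Fin.last n)) s) := by
  rw [← (Fin.snocEquiv fun _ => S).sum_comp, Fintype.sum_prod_type, Finset.sum_comm]
  exact Finset.sum_congr rfl fun y _ => Finset.sum_congr rfl fun s _ => by
    rw [← P_snoc]; rfl

theorem sum_comp_castLE_mul_P (hks : ∀ a, ∑ b, kappa a b = 1) {n N : ℕ} (hnN : n ≤ N)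
    (g : (Fin (n + 1) → S) → ℝ) :
    ∑ x : Fin (N + 1) → S, g (fun k => x (Fin.castLE (by omega) k)) * P N pi rho lab kappa h x c
      = ∑ y, g y * P n pi rho lab kappa h y c := by
  induction N, hnN using Nat.le_induction with
  | base => rfl
  | succ N hnN ih =>
    -- each summed-out step contributes a row sum of `kappa`, which is `1`
    rw [sum_mul_P_succ, ← ih]
    refine Finset.sum_congr rfl fun y _ => ?_
    have hrestrict : ∀ s : S, (fun k : Fin (n + 1) =>
        (Fin.snoc y s : Fin (N + 2) → S) (Fin.castLE (by omega) k))
        = fun k => y (Fin.castLE (Nat.succ_le_succ hnN) k) :=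
      fun s => funext fun k => Fin.snoc_castSucc (α := fun _ => S) s y (Fin.castLE _ k)
    simp only [hrestrict, ← mul_assoc, ← Finset.mul_sum, hks, mul_one]

variable [DecidableEq S]

theorem sum_filter_P_eq_of_le (hks : ∀ a, ∑ b, kappa a b = 1) {j N : ℕ} (hjN : j ≤ N) (a : S) :
    ∑ x ∈ univ.filter (fun x : Fin (N + 1) → S => x ⟨j, by omega⟩ = a),
        P N pi rho lab kappa h x c
      = ∑ y ∈ univ.filter (fun y : Fin (j + 1) → S => y (Fin.last j) = a),
        P j pi rho lab kappa h y c := by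
  simp only [Finset.sum_filter]
  convert sum_comp_castLE_mul_P hks hjN (fun y => if y (Fin.last j) = a then 1 else 0) using 2
    <;> exact (boole_mul _ _).symm

theorem sum_filter_pair_P_eq (hks : ∀ a, ∑ b, kappa a b = 1) {j N : ℕ} (hjN : j + 1 ≤ N)
    (a b : S) :
    ∑ x ∈ univ.filter (fun x : Fin (N + 1) → S => x ⟨j, by omega⟩ = a ∧ x ⟨j + 1, by omega⟩ = b),
        P N pi rho lab kappa h x c
      = kappa a b * ∑ y ∈ univ.filter (fun y : Fin (j + 1) → S => y (Fin.last j) = a),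
        P j pi rho lab kappa h y c := by
  calc _ = ∑ y : Fin (j + 2) → S,
        (if y (Fin.last j).castSucc = a ∧ y (Fin.last (j + 1)) = b then 1 else 0)
          * P (j + 1) pi rho lab kappa h y c := by
        rw [Finset.sum_filter]
        convert sum_comp_castLE_mul_P hks hjN _ using 2
        exact (boole_mul _ _).symm
    _ = _ := by
        rw [sum_mul_P_succ, Finset.sum_filter, Finset.mul_sum]
        refine Finset.sum_congr rfl fun y _ => ?_
        by_cases hya : y (Fin.last j) = a <;> simp [hya, mul_comm]

theorem sum_filter_transition_P_eq (hks : ∀ a, ∑ b, kappa a b = 1) {i N : ℕ} (hi1 : 1 ≤ i)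
    (hiN : i ≤ N) (a b : S) :
    ∑ x ∈ univ.filter (fun x : Fin (N + 1) → S => x ⟨i - 1, by omega⟩ = a ∧ x ⟨i, by omega⟩ = b),
        P N pi rho lab kappa h x c
      = kappa a b * ∑ x ∈ univ.filter (fun x : Fin (N + 1) → S => x ⟨i - 1, by omega⟩ = a),
        P N pi rho lab kappa h x c := by
  obtain ⟨j, rfl⟩ : ∃ j, i = j + 1 := ⟨i - 1, by omega⟩
  simp only [Nat.add_sub_cancel]
  rw [sum_filter_pair_P_eq hks hiN, sum_filter_P_eq_of_le (j := j) hks (by omega)]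

end DiffusionMarginals

/-- Guided reverse factorization (exact discrete core of Theorem 1):
`P(x (i−1) = a ∣ x i = b, c, h)
  = P(x (i−1) = a ∣ x i = b, h) · P(c ∣ x (i−1) = a, h) / P(c ∣ x i = b, h)`. -/
theorem guided_reverse_factorization {H S C : Type*} [Fintype S] [Fintype C] [DecidableEq S]
    (T : ℕ)
    (pi : H → ℝ) (rho : H → S → ℝ) (lab : H → S → C → ℝ) (kappa : S → S → ℝ)
    (hks : ∀ a, ∑ b, kappa a b = 1)
    (i : ℕ) (hi1 : 1 ≤ i) (hi2 : i ≤ T) (a b : S) (h : H) (c : C)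
    -- P(x (i−1) = a, h) > 0
    (hpos3 : 0 < ∑ c' : C, ∑ x ∈ univ.filter (fun x : Fin (T + 1) → S =>
        x ⟨i - 1, by omega⟩ = a), P T pi rho lab kappa h x c')
    -- P(c ∣ x i = b, h) > 0
    (hpos4 : 0 <
      (∑ x ∈ univ.filter (fun x : Fin (T + 1) → S => x ⟨i, by omega⟩ = b),
          P T pi rho lab kappa h x c) /
        (∑ c' : C, ∑ x ∈ univ.filter (fun x : Fin (T + 1) → S => x ⟨i, by omega⟩ = b),
          P T pi rho lab kappa h x c')) :
    -- P(x (i−1) = a ∣ x i = b, c, h)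
    (∑ x ∈ univ.filter (fun x : Fin (T + 1) → S =>
        x ⟨i - 1, by omega⟩ = a ∧ x ⟨i, by omega⟩ = b), P T pi rho lab kappa h x c) /
      (∑ x ∈ univ.filter (fun x : Fin (T + 1) → S => x ⟨i, by omega⟩ = b),
        P T pi rho lab kappa h x c) =
    -- P(x (i−1) = a ∣ x i = b, h)
    ((∑ c' : C, ∑ x ∈ univ.filter (fun x : Fin (T + 1) → S =>
        x ⟨i - 1, by omega⟩ = a ∧ x ⟨i, by omega⟩ = b), P T pi rho lab kappa h x c') /
      (∑ c' : C, ∑ x ∈ univ.filter (fun x : Fin (T + 1) → S => x ⟨i, by omega⟩ = b),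
        P T pi rho lab kappa h x c')) *
    -- P(c ∣ x (i−1) = a, h)
    ((∑ x ∈ univ.filter (fun x : Fin (T + 1) → S => x ⟨i - 1, by omega⟩ = a),
        P T pi rho lab kappa h x c) /
      (∑ c' : C, ∑ x ∈ univ.filter (fun x : Fin (T + 1) → S => x ⟨i - 1, by omega⟩ = a),
        P T pi rho lab kappa h x c')) /
    -- P(c ∣ x i = b, h)
    ((∑ x ∈ univ.filter (fun x : Fin (T + 1) → S => x ⟨i, by omega⟩ = b),
        P T pi rho lab kappa h x c) /
      (∑ c' : C, ∑ x ∈ univ.filter (fun x : Fin (T + 1) → S => x ⟨i, by omega⟩ = b),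
        P T pi rho lab kappa h x c')) := by
  obtain ⟨hbc, hb⟩ := div_ne_zero_iff.mp hpos4.ne'
  simp only [sum_filter_transition_P_eq hks hi1 hi2, ← Finset.mul_sum]
  field_simp
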